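/- Let k be a non-negative integer, P a finite propositional logic program, and U a model of the theory T₀(P). For each q ∈ M(U) let i_q be the unique i with c(q,i) ∈ U, let i_U = max{i_q : q ∈ M(U)}, and for 1 ≤ i ≤ i_U let [M(U)]_i = {q ∈ M(U) : i_q = i}. Then [M(U)]_i ≠ ∅ for every i with 1 ≤ i ≤ i_U. -/

import Mathlib

open scoped Classical

noncomputable section

/-- A propositional logic program rule: a head atom, a finite positive body and a
finite negative body. -/
structure LPRule (α : Type) where
  head : α
  pos : Finset α
  neg : Finset α
deriving DecidableEq

/-- A logic program is a finite set of rules. -/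
abbrev LProgram (α : Type) := Finset (LPRule α)

variable {α : Type} [DecidableEq α]

/-- `horn r`: the Horn rule with the same head and positive body as `r`
and empty negative body. -/
def LPRule.horn (r : LPRule α) : LPRule α := ⟨r.head, r.pos, ∅⟩

/-- A rule `r` is proper if `h(r) ∉ b⁺(r)` and `b⁺(r) ∩ b⁻(r) = ∅`. -/
def LPRule.proper (r : LPRule α) : Prop := r.head ∉ r.pos ∧ r.pos ∩ r.neg = ∅

/-- `At(P)`: the set of atoms occurring in `P`. -/
def atomsP (P : LProgram α) : Finset α := P.sup (fun r => insert r.head (r.pos ∪ r.neg))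

/-- `h(P)`: the set of heads of rules of `P`. -/
def headsP (P : LProgram α) : Finset α := P.image LPRule.head

/-- `Neg(P)`: the set of atoms occurring negated in `P`. -/
def negP (P : LProgram α) : Finset α := P.sup LPRule.neg

/-- The least model of a (Horn) program `Q`, given as a set of rules (negative bodies
are ignored; Horn rules have empty negative bodies): the least set `M` of atoms such
that `h(r) ∈ M` whenever `r ∈ Q` and `b⁺(r) ⊆ M`. -/
def LM (Q : Set (LPRule α)) : Set α :=
  ⋂₀ {M : Set α | ∀ r ∈ Q, (↑r.pos : Set α) ⊆ M → r.head ∈ M}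

/-- The reduct `P^S`: delete every rule whose negative body meets `S` and remove the
negative bodies of the remaining rules. -/
def reduct (P : LProgram α) (S : Set α) : Set (LPRule α) :=
  LPRule.horn '' {r | r ∈ P ∧ (↑r.neg : Set α) ∩ S = ∅}

/-- `M` is a stable model of `P` if `M = LM (P^M)`. -/
def isStable (P : LProgram α) (M : Set α) : Prop :=
  M = LM (reduct P M)

/-- The propositional atoms of the encoding `T(P)`: for each program atom `q`,
atoms `c(q)`, `c(q,i)`, `c⁻(q,i)` and `d(q,i)`. -/
inductive EncAtom (α : Type) where
  | c : α → EncAtom α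
  | ci : α → ℕ → EncAtom α
  | cm : α → ℕ → EncAtom α
  | d : α → ℕ → EncAtom α
deriving DecidableEq

/-- `U` satisfies `F₁(q,i) = c⁻(q,i) ↔ (c(q,1) ∨ … ∨ c(q,i-1))`. -/
def SatF1 (U : Set (EncAtom α)) (q : α) (i : ℕ) : Prop :=
  EncAtom.cm q i ∈ U ↔ ∃ j, 1 ≤ j ∧ j ≤ i - 1 ∧ EncAtom.ci q j ∈ U

/-- `U` satisfies `F₂(q) = c(q) ↔ (c(q,1) ∨ … ∨ c(q,k+1))`. -/
def SatF2 (k : ℕ) (U : Set (EncAtom α)) (q : α) : Prop :=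
  EncAtom.c q ∈ U ↔ ∃ j, 1 ≤ j ∧ j ≤ k + 1 ∧ EncAtom.ci q j ∈ U

/-- `U` satisfies `F₃(r,i)`; for `i ≥ 2` this is
`c⁻(a₁,i) ∧ … ∧ c⁻(a_s,i) ∧ ¬c(b₁) ∧ … ∧ ¬c(b_t) ∧ ¬c⁻(q,i)`, for `i = 1` it is
`false` when `b⁺(r) ≠ ∅` and `¬c(b₁) ∧ … ∧ ¬c(b_t)` when `b⁺(r) = ∅`. -/
def SatF3 (U : Set (EncAtom α)) (r : LPRule α) (i : ℕ) : Prop :=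
  if i = 1 then r.pos = ∅ ∧ ∀ b ∈ r.neg, EncAtom.c b ∉ U
  else (∀ a ∈ r.pos, EncAtom.cm a i ∈ U) ∧ (∀ b ∈ r.neg, EncAtom.c b ∉ U) ∧
    EncAtom.cm r.head i ∉ U

/-- `U` satisfies `F₄(q,i) = c(q,i) ↔ (F₃(r₁,i) ∨ … ∨ F₃(r_v,i))`, where
`r₁,…,r_v` are all rules of `P` with head `q`. -/
def SatF4 (P : LProgram α) (U : Set (EncAtom α)) (q : α) (i : ℕ) : Prop :=
  EncAtom.ci q i ∈ U ↔ ∃ r ∈ P, r.head = q ∧ SatF3 U r i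

/-- `U` is a model of the theory `T₀(P)`. -/
def ModelT0 (k : ℕ) (P : LProgram α) (U : Set (EncAtom α)) : Prop :=
  (∀ q ∈ atomsP P, ∀ i, 2 ≤ i → i ≤ k + 1 → SatF1 U q i) ∧
  (∀ q ∈ atomsP P, SatF2 k U q) ∧
  (∀ q ∈ atomsP P, ∀ i, 1 ≤ i → i ≤ k + 1 → SatF4 P U q i)

/-- `M(U) = {q ∈ At(P) : c(q) ∈ U}`. -/
def MU (P : LProgram α) (U : Set (EncAtom α)) : Finset α :=
  (atomsP P).filter (fun q => EncAtom.c q ∈ U)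

/-! If the level `i` were empty, take an atom `q` of least level `j > i`. The rule supporting
`c(q,j)` has all its positive body atoms on levels below `j`, hence below `i`, so it already
fires at level `i`: `c(q,i)` holds, contradicting the uniqueness of the level of `q`. -/

theorem head_mem_atomsP {P : LProgram α} {r : LPRule α} (hr : r ∈ P) : r.head ∈ atomsP P :=
  Finset.le_sup (f := fun r : LPRule α => insert r.head (r.pos ∪ r.neg)) hr
    (Finset.mem_insert_self _ _)

theorem mem_atomsP_of_mem_pos {P : LProgram α} {r : LPRule α} (hr : r ∈ P) {a : α}
    (ha : a ∈ r.pos) : a ∈ atomsP P :=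
  Finset.le_sup (f := fun r : LPRule α => insert r.head (r.pos ∪ r.neg)) hr (by simp [ha])

namespace ModelT0

variable {k : ℕ} {P : LProgram α} {U : Set (EncAtom α)}

theorem mem_MU_of_ci_mem (hU : ModelT0 k P U) {q : α} (hq : q ∈ atomsP P) {j : ℕ}
    (hj : 1 ≤ j) (hjk : j ≤ k + 1) (h : EncAtom.ci q j ∈ U) : q ∈ MU P U :=
  Finset.mem_filter.2 ⟨hq, (hU.2.1 q hq).2 ⟨j, hj, hjk, h⟩⟩

theorem cm_mem_of_le (hU : ModelT0 k P U) {q : α} (hq : q ∈ atomsP P) {i j : ℕ}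
    (hi : 2 ≤ i) (hij : i ≤ j) (hjk : j ≤ k + 1) (h : EncAtom.cm q i ∈ U) :
    EncAtom.cm q j ∈ U := by
  obtain ⟨l, hl, hli, hcl⟩ := (hU.1 q hq i hi (by omega)).1 h
  exact (hU.1 q hq j (by omega) hjk).2 ⟨l, hl, by omega, hcl⟩

theorem cm_notMem_of_ci_mem (hU : ModelT0 k P U) {q : α} (hq : q ∈ atomsP P) {j : ℕ}
    (hj : 2 ≤ j) (hjk : j ≤ k + 1) (h : EncAtom.ci q j ∈ U) : EncAtom.cm q j ∉ U := by
  obtain ⟨r, -, rfl, hF3⟩ := (hU.2.2 q hq j (by omega) hjk).1 h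
  rw [SatF3, if_neg (by omega)] at hF3
  exact hF3.2.2

theorem ci_eq (hU : ModelT0 k P U) {q : α} (hq : q ∈ atomsP P) {m m' : ℕ}
    (hm : 1 ≤ m) (hmk : m ≤ k + 1) (hm' : 1 ≤ m') (hm'k : m' ≤ k + 1)
    (h : EncAtom.ci q m ∈ U) (h' : EncAtom.ci q m' ∈ U) : m = m' := by
  -- `c(q,a)` with `a < b` forces `c⁻(q,b)`, which every rule supporting `c(q,b)` forbids
  have lower_excludes : ∀ a b, 1 ≤ a → a < b → b ≤ k + 1 →
      EncAtom.ci q a ∈ U → EncAtom.ci q b ∉ U := fun a b ha hab hb hca hcb =>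
    hU.cm_notMem_of_ci_mem hq (by omega) hb hcb
      ((hU.1 q hq b (by omega) hb).2 ⟨a, ha, by omega, hca⟩)
  rcases lt_trichotomy m m' with hlt | heq | hgt
  · exact absurd h' (lower_excludes m m' hm hlt hm'k h)
  · exact heq
  · exact absurd h (lower_excludes m' m hm' hgt hmk h')

theorem satF3_of_le (hU : ModelT0 k P U) {r : LPRule α} (hr : r ∈ P) {i j : ℕ}
    (hi : 1 ≤ i) (hij : i ≤ j) (hjk : j ≤ k + 1) (hF3 : SatF3 U r j)
    (hpos : ∀ a ∈ r.pos, ∃ l, 1 ≤ l ∧ l < i ∧ EncAtom.ci a l ∈ U) : SatF3 U r i := by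
  have hneg : ∀ b ∈ r.neg, EncAtom.c b ∉ U := by
    unfold SatF3 at hF3
    split_ifs at hF3
    exacts [hF3.2, hF3.2.1]
  rcases eq_or_lt_of_le hi with rfl | hi
  · rw [SatF3, if_pos rfl]
    refine ⟨Finset.eq_empty_of_forall_notMem fun a ha => ?_, hneg⟩
    obtain ⟨l, hl, hli, -⟩ := hpos a ha
    omega
  · rw [SatF3, if_neg (by omega)] at hF3 ⊢
    refine ⟨fun a ha => ?_, hneg,
      fun h => hF3.2.2 (hU.cm_mem_of_le (head_mem_atomsP hr) hi hij hjk h)⟩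
    obtain ⟨l, hl, hli, hcl⟩ := hpos a ha
    exact (hU.1 a (mem_atomsP_of_mem_pos hr ha) i hi (by omega)).2 ⟨l, hl, by omega, hcl⟩

theorem level_lt_of_mem_pos (hU : ModelT0 k P U) {iq : α → ℕ}
    (hiq : ∀ q ∈ MU P U, 1 ≤ iq q ∧ iq q ≤ k + 1 ∧ EncAtom.ci q (iq q) ∈ U)
    {r : LPRule α} (hr : r ∈ P) {j : ℕ} (hj : 2 ≤ j) (hjk : j ≤ k + 1)
    (hF3 : SatF3 U r j) {a : α} (ha : a ∈ r.pos) : a ∈ MU P U ∧ iq a < j := by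
  rw [SatF3, if_neg (by omega)] at hF3
  have haP := mem_atomsP_of_mem_pos hr ha
  obtain ⟨l, hl, hlj, hcl⟩ := (hU.1 a haP j hj hjk).1 (hF3.1 a ha)
  have haM := hU.mem_MU_of_ci_mem haP hl (by omega) hcl
  obtain ⟨ha1, hak, hca⟩ := hiq a haM
  have := hU.ci_eq haP ha1 hak hl (by omega) hca hcl
  exact ⟨haM, by omega⟩

end ModelT0

/-- let `U` be a model of `T₀(P)` and, for `q ∈ M(U)`, let `iq q` be the
unique `i` with `1 ≤ i ≤ k+1` and `c(q,i) ∈ U`.  Then for every `i` with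
`1 ≤ i ≤ i_U = max {iq q : q ∈ M(U)}`, the level set `[M(U)]_i = {q ∈ M(U) : iq q = i}`
is nonempty. -/
theorem level_sets_nonempty (k : ℕ) (P : LProgram α) (U : Set (EncAtom α))
    (hU : ModelT0 k P U) (iq : α → ℕ)
    (hiq : ∀ q ∈ MU P U, 1 ≤ iq q ∧ iq q ≤ k + 1 ∧ EncAtom.ci q (iq q) ∈ U) :
    ∀ i, 1 ≤ i → (∃ q ∈ MU P U, i ≤ iq q) → ∃ q ∈ MU P U, iq q = i := by
  rintro i hi ⟨q₀, hq₀, hiq₀⟩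
  by_contra! hgap
  obtain ⟨q, hq, hmin⟩ := ((MU P U).filter (i < iq ·)).exists_min_image iq
    ⟨q₀, Finset.mem_filter.2 ⟨hq₀, lt_of_le_of_ne hiq₀ (hgap q₀ hq₀).symm⟩⟩
  obtain ⟨hqM, hiq_q⟩ := Finset.mem_filter.1 hq
  have hqP : q ∈ atomsP P := (Finset.mem_filter.1 hqM).1
  obtain ⟨hq1, hqk, hci⟩ := hiq q hqM
  obtain ⟨r, hr, hrq, hF3⟩ := (hU.2.2 q hqP (iq q) hq1 hqk).1 hci
  have hF3i : SatF3 U r i := hU.satF3_of_le hr hi hiq_q.le hqk hF3 fun a ha => by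
    obtain ⟨haM, hlt⟩ := hU.level_lt_of_mem_pos hiq hr (by omega) hqk hF3 ha
    have hle : iq a ≤ i := not_lt.1 fun h => (hmin a (Finset.mem_filter.2 ⟨haM, h⟩)).not_gt hlt
    exact ⟨iq a, (hiq a haM).1, lt_of_le_of_ne hle (hgap a haM), (hiq a haM).2.2⟩
  have hcii := (hU.2.2 q hqP i hi (by omega)).2 ⟨r, hr, hrq, hF3i⟩
  exact hgap q hqM (hU.ci_eq hqP hq1 hqk hi (by omega) hci hcii)
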